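/- Let L be the backward generator of an irreducible Markov jump process on a finite connected graph with N vertices, stationary distribution ρ, and let f satisfy ∑_y ρ(y)f(y) = 0. Then the pseudo-potential V = L_D^{-1} f is given by V(x) = -∑_y (w(F_{N-2}^{x→y}) / w(F_{N-1})) f(y), where F_{N-2}^{x→y} is the set of rooted spanning forests with N-2 edges in which y is the root of its tree and x, y lie in the same tree, F_{N-1} is the set of rooted spanning trees, and w denotes the sum of products of the rates over the forests' directed edges. -/

import Mathlib

open Matrix

/-- The one-step relation of a finite set of directed edges. -/
def forestStep {V : Type*} (F : Finset (V × V)) (a b : V) : Prop := (a, b) ∈ F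

/-- `F` is a rooted spanning forest of the graph `G`: all its directed edges
are edges of `G`, every vertex has at most one outgoing edge, and there are no
directed cycles. -/
def IsRootedForest {V : Type*} [DecidableEq V] (G : SimpleGraph V)
    (F : Finset (V × V)) : Prop :=
  (∀ e ∈ F, G.Adj e.1 e.2) ∧
  (∀ x : V, (F.filter (fun e => e.1 = x)).card ≤ 1) ∧
  (∀ x y : V, (x, y) ∈ F → ¬ Relation.ReflTransGen (forestStep F) y x)

/-- `x` and `y` lie in the same tree of `F` and `y` is the root of that tree. -/
def RootedAt {V : Type*} (F : Finset (V × V)) (x y : V) : Prop :=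
  Relation.ReflTransGen (forestStep F) x y ∧ ∀ z, (y, z) ∉ F

/-- The weight of a forest: product of the rates on its directed edges. -/
def forestWeight {V : Type*} (k : V → V → ℝ) (F : Finset (V × V)) : ℝ :=
  ∏ e ∈ F, k e.1 e.2

/-- The total weight of the collection of forests satisfying `P`. -/
noncomputable def weightSum {V : Type*} [Fintype V] [DecidableEq V]
    (k : V → V → ℝ) (P : Finset (V × V) → Prop) : ℝ :=
  ∑ F : Finset (V × V), Set.indicator {F | P F} (forestWeight k) F

/-!
Write `B n` for the matrix whose `(x, y)` entry is the weight of the `n`-edge rooted forests in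
which the tree of `x` is rooted at `y`, and `W n` for the total weight of `n`-edge forests. Adding
to such a forest an edge from the root of `x`'s tree to `y` (total weight `∑ z, B n x z * k z y`),
or an edge out of `y` when `y` is that root (total weight `B n x y * ∑ w, k y w`), produces either
a graph whose only cycle passes through `y`, which arises both ways, or an `(n + 1)`-edge forest in
which `x` reaches `y`. Comparing the forests gives the recurrence
`B n * L = B (n + 1) - W (n + 1) • 1`.

No forest has `N` edges, so the rows of `B (N - 1)` are left null vectors of `L`. On a connected
graph the kernel of `L` consists of the constants, so its left kernel is spanned by `ρ`; hence
`B (N - 1) = W (N - 1) • 1 ρᵀ` (the Markov chain tree theorem), and the recurrence at `N - 2` reads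
`(-B (N - 2) / W (N - 1)) * L = 1 - 1 ρᵀ`. Since `L X = X L` and `L² X = L` also give
`X * L = 1 - 1 ρᵀ`, each row of the difference of the two matrices is a multiple of `ρ`, which
`f` annihilates.
-/

open Finset

namespace Forest

variable {V : Type*}

abbrev Reach (F : Finset (V × V)) : V → V → Prop := Relation.ReflTransGen (forestStep F)

def IsFunctional (F : Finset (V × V)) : Prop := ∀ ⦃a b c : V⦄, (a, b) ∈ F → (a, c) ∈ F → b = c

def IsAcyclic (F : Finset (V × V)) : Prop := ∀ ⦃a b : V⦄, (a, b) ∈ F → ¬ Reach F b a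

/-- Forests in the complete digraph on `V`: when the rates vanish off `G` they carry the same
weights as the rooted forests of `G` (`weightSum_isRootedForest`). -/
def IsForest (F : Finset (V × V)) : Prop := IsFunctional F ∧ IsAcyclic F

def IsRoot (F : Finset (V × V)) (r : V) : Prop := ∀ w, (r, w) ∉ F

variable {F F' : Finset (V × V)} {a b c c' d d' r r' u v w x y z : V}

theorem reach_mono (h : F ⊆ F') (hab : Reach F a b) : Reach F' a b :=
  Relation.ReflTransGen.mono (fun _ _ he => h he) _ _ hab

theorem reach_of_mem (h : (a, b) ∈ F) : Reach F a b := .single h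

theorem IsFunctional.mono (hF : IsFunctional F) (h : F' ⊆ F) : IsFunctional F' :=
  fun _ _ _ hb hc => hF (h hb) (h hc)

theorem IsAcyclic.mono (hA : IsAcyclic F) (h : F' ⊆ F) : IsAcyclic F' :=
  fun _ _ hab hba => hA (h hab) (reach_mono h hba)

theorem isAcyclic_of_lt (φ : V → ℕ) (h : ∀ e ∈ F, φ e.2 < φ e.1) :
    IsAcyclic F := by
  have hmono : ∀ {a b}, Reach F a b → φ b ≤ φ a := fun hab => by
    induction hab with
    | refl => rfl
    | tail _ hbc ih => exact (h _ hbc).le.trans ih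
  exact fun a b hab hba => (h _ hab).not_ge (hmono hba)

theorem IsRoot.eq_of_reach (hr : IsRoot F r) (h : Reach F r b) : b = r :=
  (Relation.ReflTransGen.cases_head h).elim Eq.symm fun ⟨c, hc, _⟩ => absurd hc (hr c)

theorem IsFunctional.reach_total (hF : IsFunctional F) (hb : Reach F a b) (hc : Reach F a c) :
    Reach F b c ∨ Reach F c b := by
  induction hb using Relation.ReflTransGen.head_induction_on with
  | refl => exact .inl hc
  | @head a a' haa' ha'b ih =>
    rcases Relation.ReflTransGen.cases_head hc with rfl | ⟨a'', haa'', ha''c⟩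
    · exact .inr (.head haa' ha'b)
    · exact ih (hF haa'' haa' ▸ ha''c)

theorem IsFunctional.eq_of_reach_isRoot (hF : IsFunctional F) (ha : Reach F a r)
    (ha' : Reach F a r') (hr : IsRoot F r) (hr' : IsRoot F r') : r = r' := by
  rcases hF.reach_total ha ha' with h | h
  · exact (hr.eq_of_reach h).symm
  · exact hr'.eq_of_reach h

theorem IsFunctional.reach_back (hF : IsFunctional F) (hab : (a, b) ∈ F) (hba : Reach F b a)
    (hac : Reach F a c) : Reach F c a := by
  induction hac with
  | refl => rfl
  | @tail c c' _ hcc' ih =>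
    rcases Relation.ReflTransGen.cases_head ih with rfl | ⟨c'', hcc'', hc''a⟩
    · exact hF hab hcc' ▸ hba
    · exact hF hcc'' hcc' ▸ hc''a

theorem IsFunctional.not_isRoot_of_cycle (hF : IsFunctional F) (hab : (a, b) ∈ F)
    (hba : Reach F b a) (har : Reach F a r) : ¬ IsRoot F r := fun hr =>
  hr b (hr.eq_of_reach (hF.reach_back hab hba har) ▸ hab)

theorem IsAcyclic.exists_root [Fintype V] (hA : IsAcyclic F) (a : V) :
    ∃ r, Reach F a r ∧ IsRoot F r := by
  classical
  induction h : (univ.filter (Reach F a)).card using Nat.strong_induction_on generalizing a with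
  | _ n ih =>
  by_cases ha : IsRoot F a
  · exact ⟨a, .refl, ha⟩
  simp only [IsRoot, not_forall, not_not] at ha
  obtain ⟨b, hab⟩ := ha
  have hsub : univ.filter (Reach F b) ⊂ univ.filter (Reach F a) := by
    rw [ssubset_iff_of_subset fun c hc => by simpa using .head hab (by simpa using hc)]
    exact ⟨a, by simpa using Relation.ReflTransGen.refl, by simpa using hA hab⟩
  obtain ⟨r, hbr, hr⟩ := ih _ (h ▸ card_lt_card hsub) b rfl
  exact ⟨r, .head hab hbr, hr⟩

theorem IsFunctional.injOn_fst (hF : IsFunctional F) : Set.InjOn Prod.fst (F : Set (V × V)) :=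
  fun e he e' he' h => Prod.ext h (hF (h ▸ he : (e'.1, e.2) ∈ F) he')

theorem IsForest.card_lt [Fintype V] [DecidableEq V] [Nonempty V] (hF : IsForest F) :
    F.card < Fintype.card V := by
  obtain ⟨r, -, hr⟩ := hF.2.exists_root (Classical.arbitrary V)
  have hsub : F.image Prod.fst ⊆ univ.erase r := by
    simp only [subset_iff, mem_image, mem_erase, mem_univ, and_true]
    rintro _ ⟨⟨v, w⟩, hvw, rfl⟩ rfl
    exact hr w hvw
  calc F.card = (F.image Prod.fst).card := (card_image_of_injOn hF.1.injOn_fst).symm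
    _ ≤ (univ.erase r).card := card_le_card hsub
    _ < Fintype.card V := card_erase_lt_of_mem (mem_univ r)

section

variable [DecidableEq V]

theorem reach_insert_iff :
    Reach (insert (a, b) F) u v ↔ Reach F u v ∨ Reach F u a ∧ Reach F b v := by
  constructor
  · intro h
    induction h with
    | refl => exact .inl .refl
    | @tail v v' _ hvv' ih =>
      rcases mem_insert.1 hvv' with he | he
      · obtain ⟨rfl, rfl⟩ := Prod.ext_iff.1 he
        exact .inr ⟨ih.elim id And.left, .refl⟩
      · exact ih.imp (·.tail he) fun ⟨h1, h2⟩ => ⟨h1, h2.tail he⟩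
  · rintro (h | ⟨h1, h2⟩)
    · exact reach_mono (subset_insert _ _) h
    · exact ((reach_mono (subset_insert _ _) h1).tail (mem_insert_self _ _)).trans
        (reach_mono (subset_insert _ _) h2)

theorem IsFunctional.insert (hF : IsFunctional F) (ha : IsRoot F a) :
    IsFunctional (insert (a, b) F) := by
  intro u v v' hv hv'
  rcases mem_insert.1 hv with hv | hv <;> rcases mem_insert.1 hv' with hv' | hv'
  · simp_all
  · exact absurd (by simp_all) (ha v')
  · exact absurd (by simp_all) (ha v)
  · exact hF hv hv'

theorem IsAcyclic.insert (hA : IsAcyclic F) (hba : ¬ Reach F b a) :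
    IsAcyclic (insert (a, b) F) := by
  intro u v huv hvu
  rcases mem_insert.1 huv with he | he
  · obtain ⟨rfl, rfl⟩ := Prod.ext_iff.1 he
    exact hba ((reach_insert_iff.1 hvu).elim id And.left)
  · rcases reach_insert_iff.1 hvu with h | ⟨h1, h2⟩
    · exact hA he h
    · exact hba (h2.trans ((reach_of_mem he).trans h1))

theorem reach_erase_out (h : Reach F u c) : Reach (F.erase (c, d)) u c := by
  induction h using Relation.ReflTransGen.head_induction_on with
  | refl => exact .refl
  | @head u u' huu' _ ih =>
    by_cases hu : u = c
    · exact hu ▸ .refl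
    · exact .head (mem_erase.2 ⟨by simp [hu], huu'⟩) ih

theorem reach_erase_in (h : Reach F y v) : Reach (F.erase (z, y)) y v := by
  induction h with
  | refl => exact .refl
  | @tail v v' _ hvv' ih =>
    by_cases hv : v' = y
    · exact hv ▸ .refl
    · exact ih.tail (mem_erase.2 ⟨by simp [hv], hvv'⟩)

theorem reach_erase_of_not_reach (h : Reach F u v) (hu : ¬ Reach F u c) :
    Reach (F.erase (c, d)) u v := by
  induction h using Relation.ReflTransGen.head_induction_on with
  | refl => exact .refl
  | @head u u' huu' hu'v ih =>
    have hne : u ≠ c := fun h => hu (h ▸ .refl)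
    exact .head (mem_erase.2 ⟨by simp [hne], huu'⟩) (ih fun h => hu (.head huu' h))

theorem IsFunctional.isRoot_erase (hF : IsFunctional F) (h : (c, d) ∈ F) :
    IsRoot (F.erase (c, d)) c := fun w hw =>
  (mem_erase.1 hw).1 (by rw [hF h (mem_of_mem_erase hw)])

/-- If deleting the edge out of `c` breaks every cycle, every cycle passes through `c`, hence
through every `c'` that `c` reaches. -/
theorem IsFunctional.isAcyclic_erase_of_reach (hF : IsFunctional F) (hc' : (c', d') ∈ F)
    (hcc' : Reach F c c') (hA : IsAcyclic (F.erase (c, d))) : IsAcyclic (F.erase (c', d')) := by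
  have hF' : IsFunctional (F.erase (c', d')) := hF.mono (erase_subset _ _)
  intro a b hab hba
  by_cases hac' : Reach (F.erase (c', d')) a c'
  · exact hF'.not_isRoot_of_cycle hab hba hac' (hF.isRoot_erase hc')
  have hac : ¬ Reach (F.erase (c', d')) a c := fun h => hac' (h.trans (reach_erase_out hcc'))
  have hbc : ¬ Reach (F.erase (c', d')) b c := fun h => hac (.head hab h)
  refine hA (mem_erase.2 ⟨fun h => hac (by simp_all), mem_of_mem_erase hab⟩) ?_
  exact reach_mono (erase_subset_erase _ (erase_subset _ _)) (reach_erase_of_not_reach hba hbc)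

theorem IsFunctional.exists_cycle_through (hF : IsFunctional F)
    (hA : IsAcyclic (F.erase (y, d))) (hnA : ¬ IsAcyclic F) : ∃ z, (z, y) ∈ F ∧ Reach F y z := by
  simp only [IsAcyclic, not_forall, not_not] at hnA
  obtain ⟨a, b, hab, hba⟩ := hnA
  have hby : Reach F b y := by
    by_contra hby
    have hay : a ≠ y := fun h => hby (h ▸ hba)
    exact hA (mem_erase.2 ⟨by simp [hay], hab⟩) (reach_erase_of_not_reach hba hby)
  have hya : Reach F y a := hF.reach_back hab hba (.head hab hby)
  rcases Relation.ReflTransGen.cases_tail hby with rfl | ⟨z, hbz, hzy⟩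
  · exact ⟨a, hab, hya⟩
  · exact ⟨z, hzy, (hya.tail hab).trans hbz⟩

theorem isFunctional_iff_card_filter_le_one :
    IsFunctional F ↔ ∀ x, (F.filter fun e => e.1 = x).card ≤ 1 := by
  constructor
  · refine fun hF x => card_le_one.2 fun ⟨a, b⟩ hab ⟨a', b'⟩ hab' => ?_
    rw [mem_filter] at hab hab'
    obtain ⟨hab, rfl⟩ := hab
    obtain ⟨hab', rfl⟩ := hab'
    rw [hF hab hab']
  · intro h a b c hb hc
    exact (Prod.ext_iff.1 (card_le_one.1 (h a) (a, b) (by simp [hb]) (a, c) (by simp [hc]))).2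

theorem isRootedForest_iff {G : SimpleGraph V} {F : Finset (V × V)} :
    IsRootedForest G F ↔ (∀ e ∈ F, G.Adj e.1 e.2) ∧ IsForest F := by
  rw [IsRootedForest, IsForest, isFunctional_iff_card_filter_le_one]
  exact Iff.rfl

end

open Classical in
noncomputable def predFrom (F : Finset (V × V)) (u y : V) : V :=
  if h : ∃ z, (z, y) ∈ F ∧ Reach F u z then h.choose else u

theorem predFrom_spec (h : ∃ z, (z, y) ∈ F ∧ Reach F u z) :
    (predFrom F u y, y) ∈ F ∧ Reach F u (predFrom F u y) := by
  rw [predFrom, dif_pos h]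
  exact h.choose_spec

theorem IsFunctional.predFrom_self_eq [DecidableEq V] (hF : IsFunctional F) (hzy : (z, y) ∈ F)
    (hyz : Reach F y z) : predFrom F y y = z := by
  obtain ⟨hz'y, hyz'⟩ := predFrom_spec ⟨z, hzy, hyz⟩
  by_contra hne
  have hF' : IsFunctional (F.erase (z, y)) := hF.mono (erase_subset _ _)
  have hmem : (predFrom F y y, y) ∈ F.erase (z, y) := mem_erase.2 ⟨by simp [hne], hz'y⟩
  exact hF'.not_isRoot_of_cycle hmem (reach_erase_in hyz') (.head hmem (reach_erase_in hyz))
    (hF.isRoot_erase hzy)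

theorem IsForest.predFrom_eq (hF : IsForest F) (hzy : (z, y) ∈ F) (huz : Reach F u z) :
    predFrom F u y = z := by
  obtain ⟨hz'y, huz'⟩ := predFrom_spec ⟨z, hzy, huz⟩
  have key : ∀ {z z'}, (z, y) ∈ F → (z', y) ∈ F → Reach F z z' → z = z' := fun hzy hz'y h =>
    (Relation.ReflTransGen.cases_head h).elim id fun ⟨c, hc, hcz'⟩ =>
      absurd (hF.1 hc hzy ▸ hcz') (hF.2 hz'y)
  exact (hF.1.reach_total huz' huz).elim (key hz'y hzy) fun h => (key hzy hz'y h).symm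

open Classical in
noncomputable def rootOf (F : Finset (V × V)) (a : V) : V :=
  if h : ∃ r, Reach F a r ∧ IsRoot F r then h.choose else a

theorem IsForest.rootedAt_rootOf [Fintype V] (hF : IsForest F) (a : V) :
    RootedAt F a (rootOf F a) := by
  have h := hF.2.exists_root a
  rw [rootOf, dif_pos h]
  exact h.choose_spec

theorem IsForest.rootOf_eq_iff [Fintype V] (hF : IsForest F) :
    rootOf F a = r ↔ RootedAt F a r :=
  ⟨fun h => h ▸ hF.rootedAt_rootOf a, fun h =>
    hF.1.eq_of_reach_isRoot (hF.rootedAt_rootOf a).1 h.1 (hF.rootedAt_rootOf a).2 h.2⟩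

theorem IsFunctional.rootOf_erase [Fintype V] [DecidableEq V] (hF : IsFunctional F)
    (hzy : (z, y) ∈ F) (hxz : Reach F x z) (hA : IsAcyclic (F.erase (z, y))) :
    rootOf (F.erase (z, y)) x = z :=
  (IsForest.rootOf_eq_iff ⟨hF.mono (erase_subset _ _), hA⟩).2
    ⟨reach_erase_out hxz, hF.isRoot_erase hzy⟩

open Classical in
noncomputable def next (F : Finset (V × V)) (v : V) : V :=
  if h : ∃ w, (v, w) ∈ F then h.choose else v

theorem next_mem (h : ¬ IsRoot F v) : (v, next F v) ∈ F := by
  simp only [IsRoot, not_forall, not_not] at h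
  rw [next, dif_pos h]
  exact h.choose_spec

theorem IsFunctional.next_eq (hF : IsFunctional F) (h : (v, w) ∈ F) : next F v = w :=
  hF (next_mem fun hv => hv w h) h

open Classical in
noncomputable def forests [Fintype V] (n : ℕ) : Finset (Finset (V × V)) :=
  univ.filter fun F => IsForest F ∧ F.card = n

theorem mem_forests [Fintype V] {n : ℕ} : F ∈ forests n ↔ IsForest F ∧ F.card = n := by
  simp [forests]

variable [Fintype V] [DecidableEq V]

theorem weightSum_eq_sum (k : V → V → ℝ) (P : Finset (V × V) → Prop) [DecidablePred P] :
    weightSum k P = ∑ F ∈ univ.filter P, forestWeight k F := by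
  rw [weightSum, sum_filter]
  exact sum_congr rfl fun F _ => by simp [Set.indicator_apply]

variable {k : V → V → ℝ}

theorem weightSum_congr {P Q : Finset (V × V) → Prop} (h : ∀ F, P F ↔ Q F) :
    weightSum k P = weightSum k Q := by
  rw [funext fun F => propext (h F)]

theorem weightSum_of_forall_not {P : Finset (V × V) → Prop} (h : ∀ F, ¬ P F) :
    weightSum k P = 0 := by
  classical
  rw [weightSum_eq_sum, filter_false_of_mem fun F _ => h F, sum_empty]

theorem weightSum_and_add_and_not (P Q : Finset (V × V) → Prop) :
    weightSum k (fun F => P F ∧ Q F) + weightSum k (fun F => P F ∧ ¬ Q F) = weightSum k P := by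
  classical
  simp only [weightSum_eq_sum, ← filter_filter, sum_filter_add_sum_filter_not]

/-- `i ↦ insert (e i) (F i)` is a bijection from `s` onto the graphs satisfying `Q`. -/
theorem sum_mul_rate_eq_weightSum {ι : Type*} {s : Finset ι} {Q : Finset (V × V) → Prop}
    (F : ι → Finset (V × V)) (e : ι → V × V) (j : Finset (V × V) → ι)
    (h_insert : ∀ i ∈ s, e i ∉ F i ∧ Q (insert (e i) (F i)) ∧ j (insert (e i) (F i)) = i)
    (h_erase : ∀ K, Q K → j K ∈ s ∧ e (j K) ∈ K ∧ F (j K) = K.erase (e (j K))) :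
    ∑ i ∈ s, forestWeight k (F i) * k (e i).1 (e i).2 = weightSum k Q := by
  classical
  rw [weightSum_eq_sum]
  refine sum_nbij' (fun i => insert (e i) (F i)) j (fun i hi => by simpa using (h_insert i hi).2.1)
    (fun K hK => (h_erase K (by simpa using hK)).1) (fun i hi => (h_insert i hi).2.2)
    (fun K hK => ?_) fun i hi => ?_
  · obtain ⟨-, he, hF⟩ := h_erase K (by simpa using hK)
    rw [hF, insert_erase he]
  · unfold forestWeight
    rw [prod_insert (h_insert i hi).1, mul_comm]

def laplacian (k : V → V → ℝ) : Matrix V V ℝ :=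
  Matrix.of k - Matrix.diagonal fun x => ∑ w, k x w

noncomputable def forestMatrix (k : V → V → ℝ) (n : ℕ) : Matrix V V ℝ :=
  Matrix.of fun x y => weightSum k fun F => IsForest F ∧ F.card = n ∧ RootedAt F x y

noncomputable def forestTotal (k : V → V → ℝ) (n : ℕ) : ℝ :=
  weightSum k fun F => IsForest F ∧ F.card = n

/-- `K` is functional and has exactly one cycle, which passes through `y`. -/
def IsUnicyclicAt (K : Finset (V × V)) (y : V) : Prop :=
  IsFunctional K ∧ ∃ z, (z, y) ∈ K ∧ Reach K y z ∧ IsAcyclic (K.erase (z, y))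

variable {n : ℕ}

theorem forestMatrix_apply_eq_sum (n : ℕ) (x y : V) :
    forestMatrix k n x y = ∑ F ∈ (forests n).filter (rootOf · x = y), forestWeight k F := by
  classical
  rw [forestMatrix, Matrix.of_apply, weightSum_eq_sum, forests, filter_filter]
  refine sum_congr (filter_congr fun F _ => ?_) fun _ _ => rfl
  rw [← and_assoc, and_congr_right_iff]
  exact fun hF => (hF.1.rootOf_eq_iff).symm

theorem sum_forestMatrix_apply (n : ℕ) (x : V) : ∑ y, forestMatrix k n x y = forestTotal k n := by
  classical
  simp only [forestMatrix_apply_eq_sum, sum_fiberwise, forestTotal, weightSum_eq_sum, forests]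

theorem sum_forestMatrix_mul_rate (n : ℕ) (x y : V) :
    ∑ z, forestMatrix k n x z * k z y = ∑ F ∈ forests n, forestWeight k F * k (rootOf F x) y := by
  simp only [forestMatrix_apply_eq_sum, sum_mul]
  rw [← sum_fiberwise (forests n) (rootOf · x)]
  exact sum_congr rfl fun z _ => sum_congr rfl fun F hF => by rw [(mem_filter.1 hF).2]

open scoped Classical in
theorem sum_forests_reach_rootOf :
    ∑ F ∈ (forests n).filter (fun F => Reach F y (rootOf F x)),
        forestWeight k F * k (rootOf F x) y =
      weightSum k fun K => IsUnicyclicAt K y ∧ K.card = n + 1 ∧ Reach K x y := by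
  refine sum_mul_rate_eq_weightSum id (fun F => (rootOf F x, y))
    (fun K => K.erase (predFrom K y y, y)) (fun F hF => ?_) (fun K hK => ?_)
  · dsimp only [id]
    obtain ⟨⟨hF, hcard⟩, hyr⟩ := by simpa only [mem_filter, mem_forests] using hF
    obtain ⟨hxr, hr⟩ := hF.rootedAt_rootOf x
    have hK : IsFunctional (insert (rootOf F x, y) F) := hF.1.insert hr
    have hyr' := reach_mono (subset_insert (rootOf F x, y) F) hyr
    refine ⟨hr y, ⟨⟨hK, _, mem_insert_self _ _, hyr', ?_⟩, ?_, ?_⟩, ?_⟩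
    · rw [erase_insert (hr y)]
      exact hF.2
    · rw [card_insert_of_notMem (hr y), hcard]
    · exact (reach_mono (subset_insert _ _) hxr).tail (mem_insert_self _ _)
    · simp only [hK.predFrom_self_eq (mem_insert_self _ _) hyr', erase_insert (hr y)]
  · obtain ⟨⟨hK, z, hzy, hyz, hA⟩, hcard, hxy⟩ := hK
    have hroot : rootOf (K.erase (z, y)) x = z := hK.rootOf_erase hzy (hxy.trans hyz) hA
    simp only [id, hK.predFrom_self_eq hzy hyz, hroot, mem_filter, mem_forests]
    refine ⟨⟨⟨⟨hK.mono (erase_subset _ _), hA⟩, ?_⟩, reach_erase_out hyz⟩, hzy, trivial⟩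
    rw [card_erase_of_mem hzy, hcard, Nat.add_sub_cancel]

open scoped Classical in
theorem sum_forests_not_reach_rootOf :
    ∑ F ∈ (forests n).filter (fun F => ¬ Reach F y (rootOf F x)),
        forestWeight k F * k (rootOf F x) y =
      weightSum k fun K => IsForest K ∧ K.card = n + 1 ∧ Reach K x y ∧ x ≠ y := by
  refine sum_mul_rate_eq_weightSum id (fun F => (rootOf F x, y))
    (fun K => K.erase (predFrom K x y, y)) (fun F hF => ?_) (fun K hK => ?_)
  · dsimp only [id]
    obtain ⟨⟨hF, hcard⟩, hyr⟩ := by simpa only [mem_filter, mem_forests] using hF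
    obtain ⟨hxr, hr⟩ := hF.rootedAt_rootOf x
    have hK : IsForest (insert (rootOf F x, y) F) := ⟨hF.1.insert hr, hF.2.insert hyr⟩
    have hxr' := reach_mono (subset_insert (rootOf F x, y) F) hxr
    refine ⟨hr y, ⟨hK, ?_, hxr'.tail (mem_insert_self _ _), ?_⟩, ?_⟩
    · rw [card_insert_of_notMem (hr y), hcard]
    · rintro rfl
      exact hyr hxr
    · simp only [hK.predFrom_eq (mem_insert_self _ _) hxr', erase_insert (hr y)]
  · obtain ⟨hK, hcard, hxy, hne⟩ := hK
    obtain ⟨z, hxz, hzy⟩ := (Relation.ReflTransGen.cases_tail hxy).resolve_left (Ne.symm hne)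
    have hA := hK.2.mono (erase_subset (z, y) K)
    have hroot : rootOf (K.erase (z, y)) x = z := hK.1.rootOf_erase hzy hxz hA
    simp only [id, hK.predFrom_eq hzy hxz, hroot, mem_filter, mem_forests]
    refine ⟨⟨⟨⟨hK.1.mono (erase_subset _ _), hA⟩, ?_⟩, fun hyz => ?_⟩, hzy, trivial⟩
    · rw [card_erase_of_mem hzy, hcard, Nat.add_sub_cancel]
    · exact hK.2 hzy (reach_mono (erase_subset _ _) hyz)

theorem sum_forestMatrix_mul_rate_eq_weightSum :
    ∑ z, forestMatrix k n x z * k z y =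
      (weightSum k fun K => IsUnicyclicAt K y ∧ K.card = n + 1 ∧ Reach K x y) +
        weightSum k fun K => IsForest K ∧ K.card = n + 1 ∧ Reach K x y ∧ x ≠ y := by
  classical
  rw [sum_forestMatrix_mul_rate, ← sum_filter_add_sum_filter_not _ fun F => Reach F y (rootOf F x),
    sum_forests_reach_rootOf, sum_forests_not_reach_rootOf]

theorem forestMatrix_mul_sum_rate :
    forestMatrix k n x y * ∑ w, k y w =
      weightSum k fun K => IsFunctional K ∧ K.card = n + 1 ∧ Reach K x y ∧ ¬ IsRoot K y ∧
        IsAcyclic (K.erase (y, next K y)) := by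
  rw [forestMatrix_apply_eq_sum, sum_mul_sum, ← sum_product']
  refine sum_mul_rate_eq_weightSum Prod.fst (fun p => (y, p.2))
    (fun K => (K.erase (y, next K y), next K y)) (fun p hp => ?_) (fun K hK => ?_)
  · obtain ⟨⟨⟨hF, hcard⟩, hroot⟩, -⟩ := by
      simpa only [mem_product, mem_filter, mem_forests] using hp
    obtain ⟨hxy, hy⟩ := hF.rootOf_eq_iff.1 hroot
    have hK : IsFunctional (insert (y, p.2) p.1) := hF.1.insert hy
    have hnext : next (insert (y, p.2) p.1) y = p.2 := hK.next_eq (mem_insert_self _ _)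
    refine ⟨hy p.2, ⟨hK, ?_, reach_mono (subset_insert _ _) hxy,
      fun h => h p.2 (mem_insert_self _ _), ?_⟩, ?_⟩
    · rw [card_insert_of_notMem (hy p.2), hcard]
    · rw [hnext, erase_insert (hy p.2)]
      exact hF.2
    · rw [hnext, erase_insert (hy p.2)]
  · obtain ⟨hK, hcard, hxy, hy, hA⟩ := hK
    refine ⟨?_, next_mem hy, rfl⟩
    simp only [mem_product, mem_filter, mem_forests, mem_univ, and_true]
    refine ⟨⟨⟨hK.mono (erase_subset _ _), hA⟩, ?_⟩, hK.rootOf_erase (next_mem hy) hxy hA⟩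
    rw [card_erase_of_mem (next_mem hy), hcard, Nat.add_sub_cancel]

theorem weightSum_isAcyclic_erase_next_eq :
    (weightSum k fun K => IsFunctional K ∧ K.card = n + 1 ∧ Reach K x y ∧ ¬ IsRoot K y ∧
        IsAcyclic (K.erase (y, next K y))) =
      (weightSum k fun K => IsUnicyclicAt K y ∧ K.card = n + 1 ∧ Reach K x y) +
        weightSum k fun K => IsForest K ∧ K.card = n + 1 ∧ Reach K x y ∧ ¬ IsRoot K y := by
  rw [← weightSum_and_add_and_not _ fun K => ¬ IsAcyclic K]
  congr 1 <;> refine weightSum_congr fun K => ?_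
  · constructor
    · rintro ⟨⟨hK, hcard, hxy, hy, hA⟩, hnA⟩
      obtain ⟨z, hzy, hyz⟩ := hK.exists_cycle_through hA hnA
      exact ⟨⟨hK, z, hzy, hyz, hK.isAcyclic_erase_of_reach hzy hyz hA⟩, hcard, hxy⟩
    · rintro ⟨⟨hK, z, hzy, hyz, hA⟩, hcard, hxy⟩
      have hy : ¬ IsRoot K y := fun hy => hy y (hy.eq_of_reach hyz ▸ hzy)
      exact ⟨⟨hK, hcard, hxy, hy, hK.isAcyclic_erase_of_reach (next_mem hy) (reach_of_mem hzy) hA⟩,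
        fun h => h hzy hyz⟩
  · rw [not_not]
    constructor
    · rintro ⟨⟨hK, hcard, hxy, hy, -⟩, hA⟩
      exact ⟨⟨hK, hA⟩, hcard, hxy, hy⟩
    · rintro ⟨hK, hcard, hxy, hy⟩
      exact ⟨⟨hK.1, hcard, hxy, hy, hK.2.mono (erase_subset _ _)⟩, hK.2⟩

theorem weightSum_reach_ne_sub_reach_not_isRoot (m : ℕ) (x y : V) :
    (weightSum k fun K => IsForest K ∧ K.card = m ∧ Reach K x y ∧ x ≠ y) -
        (weightSum k fun K => IsForest K ∧ K.card = m ∧ Reach K x y ∧ ¬ IsRoot K y) =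
      forestMatrix k m x y - forestTotal k m * if x = y then 1 else 0 := by
  have hreach : (weightSum k fun K => IsForest K ∧ K.card = m ∧ Reach K x y ∧ x ≠ y) +
      forestTotal k m * (if x = y then 1 else 0) =
        weightSum k fun K => IsForest K ∧ K.card = m ∧ Reach K x y := by
    by_cases hxy : x = y
    · subst hxy
      rw [weightSum_of_forall_not fun K h => h.2.2.2 rfl, if_pos rfl, mul_one, zero_add]
      exact weightSum_congr fun K => ⟨fun h => ⟨h.1, h.2, .refl⟩, fun h => ⟨h.1, h.2.1⟩⟩
    · rw [if_neg hxy, mul_zero, add_zero]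
      exact weightSum_congr fun K => by simp only [ne_eq, hxy, not_false_eq_true, and_true]
  have hroot : forestMatrix k m x y =
      weightSum k fun K => IsForest K ∧ K.card = m ∧ Reach K x y ∧ IsRoot K y := rfl
  have hsplit := weightSum_and_add_and_not (k := k)
    (fun K => IsForest K ∧ K.card = m ∧ Reach K x y) fun K => IsRoot K y
  simp only [and_assoc] at hsplit
  linarith

theorem forestMatrix_mul_laplacian (n : ℕ) :
    forestMatrix k n * laplacian k = forestMatrix k (n + 1) - forestTotal k (n + 1) • 1 := by
  ext x y
  have hentry : (forestMatrix k n * laplacian k) x y =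
      ∑ z, forestMatrix k n x z * k z y - forestMatrix k n x y * ∑ w, k y w := by
    rw [laplacian, Matrix.mul_sub, Matrix.sub_apply, Matrix.mul_diagonal, Matrix.mul_apply]
    rfl
  rw [hentry, sum_forestMatrix_mul_rate_eq_weightSum, forestMatrix_mul_sum_rate,
    weightSum_isAcyclic_erase_next_eq, add_sub_add_left_eq_sub,
    weightSum_reach_ne_sub_reach_not_isRoot]
  simp [Matrix.one_apply]

end Forest

theorem SimpleGraph.Connected.exists_adj_dist_lt {V : Type*} {G : SimpleGraph V}
    (hG : G.Connected) {v r : V} (h : v ≠ r) : ∃ w, G.Adj v w ∧ G.dist w r < G.dist v r := by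
  obtain ⟨p, hp⟩ := hG.exists_walk_length_eq_dist v r
  cases p with
  | nil => exact absurd rfl h
  | cons hvw q =>
    refine ⟨_, hvw, (SimpleGraph.dist_le q).trans_lt ?_⟩
    rw [← hp, SimpleGraph.Walk.length_cons]
    omega

theorem Matrix.exists_smul_eq_of_vecMul_eq_zero {K n : Type*} [Field K] [Fintype n]
    [DecidableEq n] {M : Matrix n n K} (hker : Module.finrank K (LinearMap.ker M.mulVecLin) ≤ 1)
    {ρ w : n → K} (hρ : ρ ≠ 0) (hρM : ρ ᵥ* M = 0) (hwM : w ᵥ* M = 0) : ∃ c : K, c • ρ = w := by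
  have hkerT : Module.finrank K (LinearMap.ker Mᵀ.mulVecLin) ≤ 1 := by
    have h := LinearMap.finrank_range_add_finrank_ker M.mulVecLin
    have hT := LinearMap.finrank_range_add_finrank_ker Mᵀ.mulVecLin
    have hrank : Module.finrank K (LinearMap.range Mᵀ.mulVecLin) =
      Module.finrank K (LinearMap.range M.mulVecLin) := M.rank_transpose
    omega
  have hmem : ∀ u : n → K, u ᵥ* M = 0 → u ∈ LinearMap.ker Mᵀ.mulVecLin := fun u hu => by
    rwa [LinearMap.mem_ker, Matrix.mulVecLin_apply, Matrix.mulVec_transpose]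
  have hspan : K ∙ ρ = LinearMap.ker Mᵀ.mulVecLin :=
    Submodule.eq_of_le_of_finrank_le ((Submodule.span_singleton_le_iff_mem _ _).2 (hmem ρ hρM))
      (hkerT.trans (finrank_span_singleton hρ).ge)
  exact Submodule.mem_span_singleton.1 (hspan ▸ hmem w hwM)

namespace Forest

variable {V : Type*} [Fintype V] [DecidableEq V] {k : V → V → ℝ} {G : SimpleGraph V}

theorem laplacian_mulVec_apply (v : V → ℝ) (x : V) :
    (laplacian k *ᵥ v) x = ∑ y, k x y * (v y - v x) := by
  simp only [laplacian, Matrix.sub_mulVec, Pi.sub_apply, Matrix.mulVec_diagonal, mul_sub,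
    sum_sub_distrib, sum_mul]
  rfl

theorem laplacian_mulVec_one : laplacian k *ᵥ 1 = 0 := by
  ext x
  simp [laplacian_mulVec_apply]

theorem eq_of_laplacian_mulVec_eq_zero (hG : G.Connected)
    (hk_nonneg : ∀ x y, 0 ≤ k x y) (hk_pos : ∀ x y, G.Adj x y → 0 < k x y) {v : V → ℝ}
    (hv : laplacian k *ᵥ v = 0) (a b : V) : v a = v b := by
  obtain ⟨m, -, hm⟩ := exists_max_image univ v ⟨a, mem_univ a⟩
  have step : ∀ c d, G.Adj c d → v c = v m → v d = v m := by
    intro c d hcd hc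
    have hterms : ∀ y ∈ univ, k c y * (v y - v c) ≤ 0 := fun y _ =>
      mul_nonpos_of_nonneg_of_nonpos (hk_nonneg c y) (by linarith [hm y (mem_univ y)])
    have hd := (sum_eq_zero_iff_of_nonpos hterms).1
      (by rw [← laplacian_mulVec_apply, hv, Pi.zero_apply]) d (mem_univ d)
    have := (mul_eq_zero.1 hd).resolve_left (hk_pos c d hcd).ne'
    linarith
  have hwalk : ∀ {u c : V}, G.Walk u c → v u = v m → v c = v m := by
    intro u c p
    induction p with
    | nil => exact id
    | cons h _ ih => exact fun hu => ih (step _ _ h hu)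
  rw [hwalk (hG.preconnected m a).some rfl, hwalk (hG.preconnected m b).some rfl]

theorem finrank_ker_laplacian_le_one (hG : G.Connected)
    (hk_nonneg : ∀ x y, 0 ≤ k x y) (hk_pos : ∀ x y, G.Adj x y → 0 < k x y) :
    Module.finrank ℝ (LinearMap.ker (laplacian k).mulVecLin) ≤ 1 := by
  obtain ⟨a⟩ := hG.nonempty
  have hle : LinearMap.ker (laplacian k).mulVecLin ≤ ℝ ∙ (1 : V → ℝ) := fun v hv =>
    Submodule.mem_span_singleton.2 ⟨v a, funext fun b => by
      simpa using eq_of_laplacian_mulVec_eq_zero hG hk_nonneg hk_pos hv a b⟩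
  exact (Submodule.finrank_mono hle).trans ((finrank_span_le_card _).trans (by simp))

theorem eq_vecMulVec_of_mul_laplacian_eq_zero (hG : G.Connected)
    (hk_nonneg : ∀ x y, 0 ≤ k x y) (hk_pos : ∀ x y, G.Adj x y → 0 < k x y) {ρ : V → ℝ}
    (hρsum : ∑ x, ρ x = 1) (hρ : ρ ᵥ* laplacian k = 0) {M : Matrix V V ℝ}
    (hM : M * laplacian k = 0) : M = Matrix.vecMulVec (M *ᵥ 1) ρ := by
  ext x y
  have hρ0 : ρ ≠ 0 := fun h => by simp [h] at hρsum
  obtain ⟨c, hc⟩ := Matrix.exists_smul_eq_of_vecMul_eq_zero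
    (finrank_ker_laplacian_le_one hG hk_nonneg hk_pos) hρ0 hρ
    (w := M x) (by rw [← Matrix.mul_apply_eq_vecMul, hM]; rfl)
  have hrow : ∀ y, M x y = c * ρ y := fun y => by rw [← hc]; rfl
  simp only [Matrix.vecMulVec_apply, Matrix.mulVec, dotProduct, Pi.one_apply, mul_one, hrow,
    ← mul_sum, hρsum]

theorem forestMatrix_card_sub_one_mul_laplacian [Nonempty V] :
    forestMatrix k (Fintype.card V - 1) * laplacian k = 0 := by
  have hnone : ∀ F : Finset (V × V), IsForest F → F.card ≠ Fintype.card V :=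
    fun F hF => hF.card_lt.ne
  have hB : forestMatrix k (Fintype.card V) = 0 := by
    ext x y
    exact weightSum_of_forall_not fun F h => hnone F h.1 h.2.1
  have hW : forestTotal k (Fintype.card V) = 0 := weightSum_of_forall_not fun F h => hnone F h.1 h.2
  rw [forestMatrix_mul_laplacian, Nat.sub_add_cancel Fintype.card_pos, hB, hW, zero_smul, sub_zero]

theorem forestMatrix_card_sub_one_eq (hG : G.Connected) (hk_nonneg : ∀ x y, 0 ≤ k x y)
    (hk_pos : ∀ x y, G.Adj x y → 0 < k x y) {ρ : V → ℝ} (hρsum : ∑ x, ρ x = 1)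
    (hρ : ρ ᵥ* laplacian k = 0) :
    forestMatrix k (Fintype.card V - 1) =
      Matrix.vecMulVec (fun _ => forestTotal k (Fintype.card V - 1)) ρ := by
  have := hG.nonempty
  rw [eq_vecMulVec_of_mul_laplacian_eq_zero hG hk_nonneg hk_pos hρsum hρ
    forestMatrix_card_sub_one_mul_laplacian]
  congr 1
  ext x
  simp [Matrix.mulVec, dotProduct, sum_forestMatrix_apply]

theorem forestMatrix_card_sub_two_mul_laplacian [Nontrivial V] (hG : G.Connected)
    (hk_nonneg : ∀ x y, 0 ≤ k x y) (hk_pos : ∀ x y, G.Adj x y → 0 < k x y) {ρ : V → ℝ}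
    (hρsum : ∑ x, ρ x = 1) (hρ : ρ ᵥ* laplacian k = 0) :
    forestMatrix k (Fintype.card V - 2) * laplacian k =
      forestTotal k (Fintype.card V - 1) • (Matrix.vecMulVec 1 ρ - 1) := by
  have hcard : Fintype.card V - 2 + 1 = Fintype.card V - 1 := by
    have := Fintype.one_lt_card (α := V)
    omega
  rw [forestMatrix_mul_laplacian, hcard, forestMatrix_card_sub_one_eq hG hk_nonneg hk_pos hρsum hρ]
  ext
  simp [Matrix.vecMulVec_apply, mul_sub]

theorem mul_laplacian_eq_one_sub_vecMulVec (hG : G.Connected) (hk_nonneg : ∀ x y, 0 ≤ k x y)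
    (hk_pos : ∀ x y, G.Adj x y → 0 < k x y) {ρ : V → ℝ} (hρsum : ∑ x, ρ x = 1)
    (hρ : ρ ᵥ* laplacian k = 0) {X : Matrix V V ℝ} (hX2 : laplacian k * X = X * laplacian k)
    (hX3 : laplacian k ^ 2 * X = laplacian k) :
    X * laplacian k = 1 - Matrix.vecMulVec 1 ρ := by
  have h : (1 - X * laplacian k) * laplacian k = 0 := by
    rw [sub_mul, one_mul, ← hX2, mul_assoc, ← hX2, ← mul_assoc, ← sq, hX3, sub_self]
  have hrow := eq_vecMulVec_of_mul_laplacian_eq_zero hG hk_nonneg hk_pos hρsum hρ h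
  rw [Matrix.sub_mulVec, Matrix.one_mulVec, ← Matrix.mulVec_mulVec, laplacian_mulVec_one,
    Matrix.mulVec_zero, sub_zero] at hrow
  rw [← hrow, sub_sub_cancel]

theorem mulVec_eq_of_mul_laplacian_eq (hG : G.Connected) (hk_nonneg : ∀ x y, 0 ≤ k x y)
    (hk_pos : ∀ x y, G.Adj x y → 0 < k x y) {ρ : V → ℝ} (hρsum : ∑ x, ρ x = 1)
    (hρ : ρ ᵥ* laplacian k = 0) {M N : Matrix V V ℝ} (h : M * laplacian k = N * laplacian k)
    {f : V → ℝ} (hf : ρ ⬝ᵥ f = 0) : M *ᵥ f = N *ᵥ f := by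
  have h0 : (M - N) * laplacian k = 0 := by rw [sub_mul, h, sub_self]
  rw [← sub_eq_zero, ← Matrix.sub_mulVec,
    eq_vecMulVec_of_mul_laplacian_eq_zero hG hk_nonneg hk_pos hρsum hρ h0,
    Matrix.vecMulVec_mulVec, hf, MulOpposite.op_zero, zero_smul]

theorem eq_laplacian_of_apply {L : Matrix V V ℝ}
    (hL : ∀ x y, L x y = if x = y then -(∑ z ∈ univ.erase x, k x z) else k x y) :
    L = laplacian k := by
  ext x y
  rw [hL, laplacian, Matrix.sub_apply, Matrix.of_apply, Matrix.diagonal_apply]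
  split_ifs with h
  · rw [h, ← add_sum_erase _ _ (mem_univ y)]
    ring
  · rw [sub_zero]


theorem weightSum_isRootedForest (hk0 : ∀ x y, ¬ G.Adj x y → k x y = 0)
    (P : Finset (V × V) → Prop) :
    weightSum k (fun F => IsRootedForest G F ∧ P F) = weightSum k (fun F => IsForest F ∧ P F) := by
  classical
  refine sum_congr rfl fun F _ => ?_
  by_cases hF : ∀ e ∈ F, G.Adj e.1 e.2
  · simp only [Set.indicator_apply, Set.mem_ofPred_eq, isRootedForest_iff, and_iff_right hF]
  · simp only [not_forall] at hF
    obtain ⟨e, he, hne⟩ := hF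
    have h0 : forestWeight k F = 0 := prod_eq_zero he (hk0 _ _ hne)
    simp [Set.indicator_apply, h0]

theorem weightSum_isRootedForest_pos (hk_pos : ∀ x y, G.Adj x y → 0 < k x y)
    {P : Finset (V × V) → Prop} (h : ∃ F, IsRootedForest G F ∧ P F) :
    0 < weightSum k (fun F => IsRootedForest G F ∧ P F) := by
  classical
  have hpos : ∀ F, IsRootedForest G F → 0 < forestWeight k F :=
    fun F hF => prod_pos fun e he => hk_pos _ _ (hF.1 e he)
  obtain ⟨F, hF, hP⟩ := h
  rw [weightSum_eq_sum]
  exact sum_pos' (fun F hF => (hpos F (mem_filter.1 hF).2.1).le)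
    ⟨F, mem_filter.2 ⟨mem_univ F, hF, hP⟩, hpos F hF⟩

theorem exists_spanning_tree (hG : G.Connected) :
    ∃ F, IsRootedForest G F ∧ F.card = Fintype.card V - 1 := by
  obtain ⟨r⟩ := hG.nonempty
  have h : ∀ v, ∃ w, v ≠ r → G.Adj v w ∧ G.dist w r < G.dist v r := fun v => by
    by_cases hv : v = r
    · exact ⟨v, fun h => absurd hv h⟩
    · obtain ⟨w, hw⟩ := hG.exists_adj_dist_lt hv
      exact ⟨w, fun _ => hw⟩
  choose parent hparent using h
  have hinj : Function.Injective fun v => (v, parent v) := fun _ _ h => (Prod.ext_iff.1 h).1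
  refine ⟨(univ.erase r).image fun v => (v, parent v), isRootedForest_iff.2 ⟨?_, ?_, ?_⟩, ?_⟩
  · simp only [mem_image, mem_erase, mem_univ, and_true]
    rintro _ ⟨v, hv, rfl⟩
    exact (hparent v hv).1
  · intro a b c hb hc
    simp only [mem_image, Prod.mk.injEq] at hb hc
    obtain ⟨_, -, rfl, rfl⟩ := hb
    obtain ⟨_, -, rfl, rfl⟩ := hc
    rfl
  · refine isAcyclic_of_lt (G.dist · r) ?_
    simp only [mem_image, mem_erase, mem_univ, and_true]
    rintro _ ⟨v, hv, rfl⟩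
    exact (hparent v hv).2
  · rw [card_image_of_injective _ hinj, card_erase_of_mem (mem_univ r), card_univ]

end Forest

theorem pseudo_potential_forest_formula_general
    {V : Type*} [Fintype V] [DecidableEq V]
    (G : SimpleGraph V) (hG : G.Connected)
    (k : V → V → ℝ) (hkpos : ∀ x y, G.Adj x y → 0 < k x y)
    (hk0 : ∀ x y, ¬ G.Adj x y → k x y = 0)
    (L : Matrix V V ℝ)
    (hL : ∀ x y, L x y = if x = y then -(∑ z ∈ Finset.univ.erase x, k x z) else k x y)
    (ρ : V → ℝ) (hρsum : ∑ x, ρ x = 1)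
    (hρstat : Matrix.vecMul ρ L = 0)
    (X : Matrix V V ℝ)
    (hX2 : L * X = X * L) (hX3 : L ^ 2 * X = L)
    (f : V → ℝ) (hf : ∑ y, ρ y * f y = 0) (x : V) :
    X.mulVec f x =
      -∑ y, (weightSum k
            (fun F => IsRootedForest G F ∧ F.card = Fintype.card V - 2 ∧ RootedAt F x y) /
          weightSum k
            (fun F => IsRootedForest G F ∧ F.card = Fintype.card V - 1)) * f y := by
  -- With one vertex `card V - 2 = card V - 1`, so the recurrence cannot be used; but `f = 0`.
  rcases subsingleton_or_nontrivial V with hV | hV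
  · have hf0 : f = 0 := funext fun y => by
      rw [Fintype.sum_subsingleton _ y] at hρsum hf
      rwa [hρsum, one_mul] at hf
    simp [hf0]
  obtain rfl : L = Forest.laplacian k := Forest.eq_laplacian_of_apply hL
  have hk_nonneg : ∀ x y, 0 ≤ k x y := fun x y =>
    (em (G.Adj x y)).elim (fun h => (hkpos x y h).le) fun h => (hk0 x y h).ge
  have hT : 0 < Forest.forestTotal k (Fintype.card V - 1) := by
    rw [Forest.forestTotal, ← Forest.weightSum_isRootedForest hk0]
    exact Forest.weightSum_isRootedForest_pos hkpos (Forest.exists_spanning_tree hG)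
  set B := Forest.forestMatrix k (Fintype.card V - 2)
  set T := Forest.forestTotal k (Fintype.card V - 1)
  have hXf : X *ᵥ f = ((-T⁻¹) • B) *ᵥ f := by
    refine Forest.mulVec_eq_of_mul_laplacian_eq hG hk_nonneg hkpos hρsum hρstat ?_ hf
    rw [Forest.mul_laplacian_eq_one_sub_vecMulVec hG hk_nonneg hkpos hρsum hρstat hX2 hX3,
      Matrix.smul_mul,
      Forest.forestMatrix_card_sub_two_mul_laplacian hG hk_nonneg hkpos hρsum hρstat,
      smul_smul, neg_mul, inv_mul_cancel₀ hT.ne', neg_one_smul, neg_sub]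
  calc (X *ᵥ f) x = -∑ y, B x y / T * f y := by
        rw [hXf, Matrix.smul_mulVec]
        simp [Matrix.mulVec, dotProduct, mul_sum, div_eq_inv_mul, mul_assoc]
    _ = _ := by simp only [Forest.weightSum_isRootedForest hk0]; rfl

/-- Graphical formula for the pseudo-potential: for an irreducible Markov jump
process on a finite connected graph with `N` vertices, stationary distribution
`ρ`, and a source `f` with `⟨f⟩ = 0`, the pseudo-potential `V = L_D⁻¹ f`
(where `L_D⁻¹` is the Drazin inverse of the backward generator `L`) satisfies
`V(x) = -∑_y (w(F_{N-2}^{x→y}) / w(F_{N-1})) f(y)`. -/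
theorem pseudo_potential_forest_formula
    {V : Type*} [Fintype V] [DecidableEq V]
    (G : SimpleGraph V) (hG : G.Connected)
    (k : V → V → ℝ) (hkpos : ∀ x y, G.Adj x y → 0 < k x y)
    (hk0 : ∀ x y, ¬ G.Adj x y → k x y = 0)
    (L : Matrix V V ℝ)
    (hL : ∀ x y, L x y = if x = y then -(∑ z ∈ Finset.univ.erase x, k x z) else k x y)
    (ρ : V → ℝ) (hρpos : ∀ x, 0 ≤ ρ x) (hρsum : ∑ x, ρ x = 1)
    (hρstat : Matrix.vecMul ρ L = 0)
    (X : Matrix V V ℝ)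
    (hX1 : X * L * X = X) (hX2 : L * X = X * L) (hX3 : L ^ 2 * X = L)
    (f : V → ℝ) (hf : ∑ y, ρ y * f y = 0) (x : V) :
    X.mulVec f x =
      -∑ y, (weightSum k
            (fun F => IsRootedForest G F ∧ F.card = Fintype.card V - 2 ∧ RootedAt F x y) /
          weightSum k
            (fun F => IsRootedForest G F ∧ F.card = Fintype.card V - 1)) * f y :=
  pseudo_potential_forest_formula_general G hG k hkpos hk0 L hL ρ hρsum hρstat X hX2 hX3 f hf x
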